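/- Let Γ be a Bieberbach-type subgroup of the affine group of ℝⁿ with parameters (n, q), with u_γ ∈ (1/q)ℤⁿ for every γ ∈ Γ. Let s be an integer with s ≡ 1 (mod q), and let φ: Γ → Γ be a group homomorphism such that g_{φ(γ)} = g_γ for all γ ∈ Γ and φ sends the translation by m to the translation by s·m for every m ∈ ℤⁿ. Define θ_γ := s•u_γ − u_{φ(γ)}. Then for all γ, δ ∈ Γ: (i) θ_γ ∈ ℤⁿ; (ii) if g_γ = g_δ then θ_γ = θ_δ; (iii) θ_{γδ} = g_γ(θ_δ) + θ_γ. -/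

import Mathlib

open Matrix

noncomputable section

abbrev Aff (n : ℕ) := (Fin n → ℝ) ≃ᵃ[ℝ] (Fin n → ℝ)

/-- `ℤⁿ` as a subset of `ℝⁿ`. -/
def intVec (n : ℕ) : Set (Fin n → ℝ) := {v | ∀ i, ∃ m : ℤ, v i = m}

/-- `(1/q)ℤⁿ` as a subset of `ℝⁿ`. -/
def qIntVec (n q : ℕ) : Set (Fin n → ℝ) := {v | ∀ i, ∃ m : ℤ, (q : ℝ) * v i = m}

/-- The translation part `u_γ` of an affine bijection. -/
def uPart {n : ℕ} (γ : Aff n) : Fin n → ℝ := γ 0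

/-- The linear part `g_γ` of an affine bijection. -/
def gPart {n : ℕ} (γ : Aff n) : (Fin n → ℝ) →ₗ[ℝ] (Fin n → ℝ) := γ.linear

/-- A linear map lies in `GLₙ(ℤ)` if it is given by an integer matrix invertible over `ℤ`. -/
def IsIntegralGL {n : ℕ} (f : (Fin n → ℝ) →ₗ[ℝ] (Fin n → ℝ)) : Prop :=
  ∃ M : Matrix (Fin n) (Fin n) ℤ, IsUnit M ∧ ∀ x, f x = (M.map (Int.cast : ℤ → ℝ)) *ᵥ x

/-- The subgroup of translations by integer vectors. -/
def intTranslations (n : ℕ) : Subgroup (Aff n) where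
  carrier := {γ | ∃ m ∈ intVec n, ∀ x, γ x = x + m}
  one_mem' := ⟨0, fun i => ⟨0, by simp⟩, fun x => by simp [AffineEquiv.one_def]⟩
  mul_mem' := by
    rintro a b ⟨ma, hma, ha⟩ ⟨mb, hmb, hb⟩
    refine ⟨mb + ma, fun i => ?_, fun x => ?_⟩
    · obtain ⟨p, hp⟩ := hma i; obtain ⟨r, hr⟩ := hmb i
      exact ⟨r + p, by simp [Pi.add_apply, hp, hr]⟩
    · simp [AffineEquiv.coe_mul, Function.comp, hb, ha, add_assoc]
  inv_mem' := by
    rintro a ⟨m, hm, ha⟩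
    refine ⟨-m, fun i => ?_, fun x => ?_⟩
    · obtain ⟨p, hp⟩ := hm i; exact ⟨-p, by simp [hp]⟩
    · have : a (x + -m) = x := by rw [ha]; abel
      calc a⁻¹ x = a⁻¹ (a (x + -m)) := by rw [this]
      _ = x + -m := by rw [AffineEquiv.inv_def, AffineEquiv.symm_apply_apply]

/-- A Bieberbach-type subgroup of the affine group of `ℝⁿ` with parameters `(n, q)`. -/
structure IsBieberbach {n : ℕ} (Γ : Subgroup (Aff n)) (q : ℕ) : Prop where
  /-- every element has linear part in `GLₙ(ℤ)` -/
  integral : ∀ γ ∈ Γ, IsIntegralGL (gPart γ)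
  /-- elements with identity linear part are integer translations -/
  trans_of_linear_id : ∀ γ ∈ Γ, γ.linear = LinearEquiv.refl ℝ (Fin n → ℝ) → γ ∈ intTranslations n
  /-- all integer translations belong to `Γ` -/
  trans_le : intTranslations n ≤ Γ
  /-- the integer translations have index `q` in `Γ` -/
  index_eq : ((intTranslations n).subgroupOf Γ).index = q

/-! Since `φ` preserves linear parts, `γ⁻¹ φ(γ)` is an integer translation, by `m` say, so
`θ_γ = (s - 1) u_γ - g_γ m`; this is integral because `q ∣ s - 1` and `q u_γ ∈ ℤⁿ`. The cocycle
identity comes from `u_{γδ} = g_γ u_δ + u_γ` applied to `γδ` and to `φ(γ) φ(δ)`. By the hypothesis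
on `φ`, `θ` vanishes on integer translations, so the cocycle identity gives `θ_{γτ} = θ_γ` for
those `τ`; and two elements of `Γ` with the same linear part differ by such a `τ`. -/

theorem AffineEquiv.apply_eq_linear_add {k V₁ V₂ : Type*} [Ring k] [AddCommGroup V₁] [Module k V₁]
    [AddCommGroup V₂] [Module k V₂] (e : V₁ ≃ᵃ[k] V₂) (x : V₁) : e x = e.linear x + e 0 :=
  congrFun e.toAffineMap.decomp x

lemma AffineEquiv.linear_inv_mul_eq_refl {k V : Type*} [Ring k] [AddCommGroup V] [Module k V]
    {e e' : V ≃ᵃ[k] V} (h : e.linear = e'.linear) : (e⁻¹ * e').linear = LinearEquiv.refl k V := by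
  change AffineEquiv.linearHom (e⁻¹ * e') = 1
  rw [map_mul, map_inv, AffineEquiv.linearHom_apply, AffineEquiv.linearHom_apply, h, inv_mul_cancel]

section Lattice

variable {n : ℕ}

lemma sub_mem_intVec {v w : Fin n → ℝ} (hv : v ∈ intVec n) (hw : w ∈ intVec n) :
    v - w ∈ intVec n := fun i => by
  obtain ⟨a, ha⟩ := hv i
  obtain ⟨b, hb⟩ := hw i
  exact ⟨a - b, by simp [ha, hb]⟩

lemma smul_mem_intVec_of_mem_qIntVec {q : ℕ} {k : ℤ} (hk : (q : ℤ) ∣ k) {v : Fin n → ℝ}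
    (hv : v ∈ qIntVec n q) : (k : ℝ) • v ∈ intVec n := fun i => by
  obtain ⟨c, rfl⟩ := hk
  obtain ⟨a, ha⟩ := hv i
  exact ⟨c * a, by simp [← ha, mul_assoc, mul_left_comm]⟩

lemma IsIntegralGL.map_mem_intVec {f : (Fin n → ℝ) →ₗ[ℝ] (Fin n → ℝ)} (hf : IsIntegralGL f)
    {v : Fin n → ℝ} (hv : v ∈ intVec n) : f v ∈ intVec n := fun i => by
  obtain ⟨M, -, hM⟩ := hf
  choose w hw using hv
  refine ⟨(M *ᵥ w) i, ?_⟩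
  rw [hM, show v = Int.castRingHom ℝ ∘ w from funext hw]
  exact ((Int.castRingHom ℝ).map_mulVec M w i).symm

end Lattice

section TranslationPart

variable {n : ℕ}

lemma uPart_mul (γ δ : Aff n) : uPart (γ * δ) = gPart γ (uPart δ) + uPart γ :=
  γ.apply_eq_linear_add (δ 0)

lemma uPart_eq_of_translation {τ : Aff n} {m : Fin n → ℝ} (hτ : ∀ x, τ x = x + m) :
    uPart τ = m := by
  simp [uPart, hτ]

lemma uPart_mul_translation (γ : Aff n) {τ : Aff n} {m : Fin n → ℝ} (hτ : ∀ x, τ x = x + m) :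
    uPart (γ * τ) = gPart γ m + uPart γ := by
  rw [uPart_mul, uPart_eq_of_translation hτ]

lemma IsBieberbach.inv_mul_mem_intTranslations {Γ : Subgroup (Aff n)} {q : ℕ}
    (hΓ : IsBieberbach Γ q) {γ δ : Aff n} (hγ : γ ∈ Γ) (hδ : δ ∈ Γ) (h : gPart γ = gPart δ) :
    γ⁻¹ * δ ∈ intTranslations n :=
  hΓ.trans_of_linear_id _ (Γ.mul_mem (Γ.inv_mem hγ) hδ)
    (AffineEquiv.linear_inv_mul_eq_refl (LinearEquiv.toLinearMap_injective h))

end TranslationPart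

section Theta

variable {n : ℕ} {Γ : Subgroup (Aff n)}

def theta (φ : Γ →* Γ) (s : ℝ) (γ : Γ) : Fin n → ℝ :=
  s • uPart (γ : Aff n) - uPart (φ γ : Aff n)

lemma theta_mul {φ : Γ →* Γ} (hφg : ∀ γ : Γ, gPart (φ γ : Aff n) = gPart (γ : Aff n)) (s : ℝ)
    (γ δ : Γ) : theta φ s (γ * δ) = gPart (γ : Aff n) (theta φ s δ) + theta φ s γ := by
  simp only [theta, map_mul, Subgroup.coe_mul, uPart_mul, hφg, map_sub, map_smul, smul_add]
  abel

lemma theta_eq_zero_of_translation {φ : Γ →* Γ} {s : ℝ} {τ : Γ} {m : Fin n → ℝ}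
    (hτ : ∀ x, (τ : Aff n) x = x + m) (hφτ : ∀ x, (φ τ : Aff n) x = x + s • m) :
    theta φ s τ = 0 := by
  rw [theta, uPart_eq_of_translation hτ, uPart_eq_of_translation hφτ, sub_self]

lemma theta_eq_of_gPart_eq {q : ℕ} (hΓ : IsBieberbach Γ q) {φ : Γ →* Γ} {s : ℤ}
    (hφg : ∀ γ : Γ, gPart (φ γ : Aff n) = gPart (γ : Aff n))
    (hφt : ∀ (γ : Γ) (m : Fin n → ℝ), m ∈ intVec n → (∀ x, (γ : Aff n) x = x + m) →
        ∀ x, (φ γ : Aff n) x = x + (s : ℝ) • m)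
    {γ δ : Γ} (h : gPart (γ : Aff n) = gPart (δ : Aff n)) : theta φ s γ = theta φ s δ := by
  obtain ⟨m, hm, hτ⟩ := hΓ.inv_mul_mem_intTranslations γ.2 δ.2 h
  have hθτ : theta φ s (γ⁻¹ * δ) = 0 := theta_eq_zero_of_translation hτ (hφt _ m hm hτ)
  calc theta φ s γ = theta φ s (γ * (γ⁻¹ * δ)) := by
        rw [theta_mul hφg, hθτ, map_zero, zero_add]
    _ = theta φ s δ := by rw [mul_inv_cancel_left]

lemma theta_mem_intVec {q : ℕ} (hΓ : IsBieberbach Γ q)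
    (hu : ∀ γ ∈ Γ, uPart γ ∈ qIntVec n q) {s : ℤ} (hs1 : s ≡ 1 [ZMOD (q : ℤ)]) {φ : Γ →* Γ}
    (hφg : ∀ γ : Γ, gPart (φ γ : Aff n) = gPart (γ : Aff n)) (γ : Γ) :
    theta φ s γ ∈ intVec n := by
  obtain ⟨m, hm, hτ⟩ := hΓ.inv_mul_mem_intTranslations γ.2 (φ γ).2 (hφg γ).symm
  have hθ : theta φ s γ = ((s - 1 : ℤ) : ℝ) • uPart (γ : Aff n) - gPart (γ : Aff n) m := by
    rw [theta, ← mul_inv_cancel_left (γ : Aff n) (φ γ), uPart_mul_translation _ hτ]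
    push_cast
    rw [sub_smul, one_smul]
    abel
  rw [hθ]
  exact sub_mem_intVec (smul_mem_intVec_of_mem_qIntVec (Int.ModEq.dvd hs1.symm) (hu _ γ.2))
    ((hΓ.integral _ γ.2).map_mem_intVec hm)

end Theta

theorem theta_crossedHom_general {n q : ℕ} (Γ : Subgroup (Aff n))
    (hΓ : IsBieberbach Γ q)
    (hu : ∀ γ ∈ Γ, uPart γ ∈ qIntVec n q)
    (s : ℤ) (hs1 : s ≡ 1 [ZMOD (q : ℤ)])
    (φ : Γ →* Γ)
    (hφg : ∀ γ : Γ, gPart (φ γ : Aff n) = gPart (γ : Aff n))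
    (hφt : ∀ (γ : Γ) (m : Fin n → ℝ), m ∈ intVec n → (∀ x, (γ : Aff n) x = x + m) →
        ∀ x, (φ γ : Aff n) x = x + (s : ℝ) • m)
    (θ : Γ → Fin n → ℝ)
    (hθ : ∀ γ : Γ, θ γ = (s : ℝ) • uPart (γ : Aff n) - uPart (φ γ : Aff n)) :
    (∀ γ : Γ, θ γ ∈ intVec n) ∧
    (∀ γ δ : Γ, gPart (γ : Aff n) = gPart (δ : Aff n) → θ γ = θ δ) ∧
    (∀ γ δ : Γ, θ (γ * δ) = gPart (γ : Aff n) (θ δ) + θ γ) := by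
  obtain rfl : θ = theta φ s := funext hθ
  exact ⟨theta_mem_intVec hΓ hu hs1 hφg, fun _ _ => theta_eq_of_gPart_eq hΓ hφg hφt,
    theta_mul hφg s⟩

/-- **The crossed homomorphism `θ`** (Farrell–Gogolev, proof of Proposition 3): let `Γ`
be a Bieberbach-type subgroup with parameters `(n, q)` whose translation parts lie in
`(1/q)ℤⁿ`, let `s ≡ 1 (mod q)` be an integer, and `φ : Γ → Γ` a homomorphism fixing
linear parts and sending the translation by `m ∈ ℤⁿ` to the translation by `s·m`.
Define `θ_γ := s•u_γ − u_{φ(γ)}`. Then (i) `θ_γ ∈ ℤⁿ`; (ii) `θ_γ` depends only on the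
linear part `g_γ`; (iii) `θ_{γδ} = g_γ(θ_δ) + θ_γ`. -/
theorem theta_crossedHom {n q : ℕ} (hq : 0 < q) (Γ : Subgroup (Aff n))
    (hΓ : IsBieberbach Γ q)
    (hu : ∀ γ ∈ Γ, uPart γ ∈ qIntVec n q)
    (s : ℤ) (hs1 : s ≡ 1 [ZMOD (q : ℤ)])
    (φ : Γ →* Γ)
    (hφg : ∀ γ : Γ, gPart (φ γ : Aff n) = gPart (γ : Aff n))
    (hφt : ∀ (γ : Γ) (m : Fin n → ℝ), m ∈ intVec n → (∀ x, (γ : Aff n) x = x + m) →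
        ∀ x, (φ γ : Aff n) x = x + (s : ℝ) • m)
    (θ : Γ → Fin n → ℝ)
    (hθ : ∀ γ : Γ, θ γ = (s : ℝ) • uPart (γ : Aff n) - uPart (φ γ : Aff n)) :
    (∀ γ : Γ, θ γ ∈ intVec n) ∧
    (∀ γ δ : Γ, gPart (γ : Aff n) = gPart (δ : Aff n) → θ γ = θ δ) ∧
    (∀ γ δ : Γ, θ (γ * δ) = gPart (γ : Aff n) (θ δ) + θ γ) :=
  theta_crossedHom_general Γ hΓ hu s hs1 φ hφg hφt θ hθ
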